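/- In dimension $d$, the number of combinatorially distinct basic cross-flips is exactly $2^{d+1}-1$, i.e., the equivalence classes of diamond complexes $\Diamond(\Gamma_I)$ for nonempty $I\subseteq\{0,\ldots,d+1\}$ with $I\ne\{0,\ldots,d+1\}$ under simplicial isomorphism are in bijection with the nonempty subsets of $\{0,\ldots,d\}$. -/

import Mathlib

namespace Paper

/-- Ambient vertex type in dimension `d`: original vertices `0,…,d+1` (left)
and new vertices `v_0,…,v_d` (right). -/
abbrev V (d : ℕ) := Sum (Fin (d+2)) (Fin (d+1))

def origV (d m : ℕ) : V d := Sum.inl ⟨m % (d+2), Nat.mod_lt m (by omega)⟩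
def newV (d m : ℕ) : V d := Sum.inr ⟨m % (d+1), Nat.mod_lt m (by omega)⟩

variable {W : Type*} [DecidableEq W] {W' : Type*} [DecidableEq W']

def IsComplex (Δ : Set (Finset W)) : Prop := ∀ F ∈ Δ, ∀ G, G ⊆ F → G ∈ Δ

def isFacet (Δ : Set (Finset W)) (F : Finset W) : Prop :=
  F ∈ Δ ∧ ∀ G ∈ Δ, F ⊆ G → G = F

def simplexOn (A : Finset W) : Set (Finset W) := {F | F ⊆ A}

def bdrySimplex (A : Finset W) : Set (Finset W) := {F | F ⊂ A}

def joinC (Δ Γ : Set (Finset W)) : Set (Finset W) := {s | ∃ a ∈ Δ, ∃ b ∈ Γ, s = a ∪ b}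

def lkC (Δ : Set (Finset W)) (F : Finset W) : Set (Finset W) :=
  {G | Disjoint F G ∧ F ∪ G ∈ Δ}

def delFace (Δ : Set (Finset W)) (F : Finset W) : Set (Finset W) := {G ∈ Δ | ¬ F ⊆ G}

/-- Stellar subdivision at `F` with new vertex `v`. -/
def sdC (v : W) (F : Finset W) (Δ : Set (Finset W)) : Set (Finset W) :=
  delFace Δ F ∪ joinC (simplexOn {v}) (joinC (bdrySimplex F) (lkC Δ F))

/-- Deletion of a subcomplex: the complex generated by the facets of `Δ`
that are not facets of `Γ`. -/
def delSub (Δ Γ : Set (Finset W)) : Set (Finset W) :=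
  {G | ∃ F, isFacet Δ F ∧ ¬ isFacet Γ F ∧ G ⊆ F}

def IsInduced (Γ Δ : Set (Finset W)) : Prop :=
  Γ ⊆ Δ ∧ ∀ F ∈ Δ, (∀ v ∈ F, ({v} : Finset W) ∈ Γ) → F ∈ Γ

/-- Simplicial isomorphism (via a permutation of the ambient vertex set). -/
def IsoC (Δ Γ : Set (Finset W)) : Prop :=
  ∃ e : Equiv.Perm W, ∀ F : Finset W, F ∈ Δ ↔ F.image (⇑e) ∈ Γ

def mapC (f : W → W') (Δ : Set (Finset W)) : Set (Finset W') := {F | ∃ G ∈ Δ, F = G.image f}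

/-- Number of faces of cardinality `i` (i.e. dimension `i-1`). -/
noncomputable def fnum (Δ : Set (Finset W)) (i : ℕ) : ℕ := {F | F ∈ Δ ∧ F.card = i}.ncard

/-- `h`-numbers of a `d`-dimensional complex. -/
noncomputable def hnum (d : ℕ) (Δ : Set (Finset W)) (j : ℕ) : ℤ :=
  ∑ i ∈ Finset.range (j+1),
    (-1 : ℤ)^(j-i) * ((d+1-i).choose (d+1-j) : ℤ) * (fnum Δ i : ℤ)

/-- `R` is the restriction face of the `i`-th facet of the ordering `L`. -/
def IsRestriction (L : List (Finset W)) (i : ℕ) (R : Finset W) : Prop :=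
  R ⊆ L.getD i ∅ ∧ (∀ j < i, ¬ R ⊆ L.getD j ∅) ∧
    ∀ G ⊆ L.getD i ∅, (∀ j < i, ¬ G ⊆ L.getD j ∅) → R ⊆ G

def IsShelling (Δ : Set (Finset W)) (L : List (Finset W)) : Prop :=
  L.Nodup ∧ (∀ F, F ∈ L ↔ isFacet Δ F) ∧ ∀ i < L.length, ∃ R, IsRestriction L i R

def Shellable (Δ : Set (Finset W)) : Prop := ∃ L, IsShelling Δ L

def IsRelRestriction (Sg : Set (Finset W)) (L : List (Finset W)) (i : ℕ) (R : Finset W) : Prop :=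
  R ⊆ L.getD i ∅ ∧ R ∉ Sg ∧ (∀ j < i, ¬ R ⊆ L.getD j ∅) ∧
    ∀ G ⊆ L.getD i ∅, G ∉ Sg → (∀ j < i, ¬ G ⊆ L.getD j ∅) → R ⊆ G

/-- Shelling of the relative complex `(Δ, Sg)`. -/
def IsRelShelling (Δ Sg : Set (Finset W)) (L : List (Finset W)) : Prop :=
  L.Nodup ∧ (∀ F, F ∈ L ↔ (isFacet Δ F ∧ F ∉ Sg)) ∧
    ∀ i < L.length, ∃ R, IsRelRestriction Sg L i R

/-- The facet of the `(d+1)`-simplex on `{0,…,d+1}` omitting vertex `i`. -/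
def Gface (d i : ℕ) : Finset (V d) :=
  ((Finset.range (d+2)).filter (fun j => j ≠ i)).image (origV d)

def GammaC (d i : ℕ) : Set (Finset (V d)) := simplexOn (Gface d i)

def GammaU (d : ℕ) (I : Finset ℕ) : Set (Finset (V d)) := {F | ∃ i ∈ I, F ⊆ Gface d i}

/-- The face `F_i = {i+1,…,d+1}` subdivided by the diamond operation. -/
def Fsub (d i : ℕ) : Finset (V d) := (Finset.Ioc i (d+1)).image (origV d)

/-- The diamond operation: successive stellar subdivisions at `F_0, F_1, …, F_d`
with new vertices `v_0,…,v_d` (subdivision at a non-face has no effect). -/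
def Diam (d : ℕ) (Δ : Set (Finset (V d))) : Set (Finset (V d)) :=
  (List.range (d+1)).foldl (fun Γ i => sdC (newV d i) (Fsub d i) Γ) Δ

def DiamU (d : ℕ) (I : Finset ℕ) : Set (Finset (V d)) := Diam d (GammaU d I)

/-- Boundary complex of the cross-polytope on the vertex pairs `{j, v_j}`, `j ∈ S`. -/
def crossN (d : ℕ) (S : Finset ℕ) : Set (Finset (V d)) :=
  {F | (∀ x ∈ F, ∃ j ∈ S, x = origV d j ∨ x = newV d j) ∧
       ∀ j ∈ S, ¬ (origV d j ∈ F ∧ newV d j ∈ F)}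

/-- Boundary complex: generated by the faces of cardinality `n` contained in
exactly one facet. -/
def bdryC (n : ℕ) (Δ : Set (Finset W)) : Set (Finset W) :=
  {G | ∃ F, G ⊆ F ∧ F ∈ Δ ∧ F.card = n ∧ ∃! H, isFacet Δ H ∧ F ⊆ H}

/-- Positions in `P` at which `G` differs from the reference facet `F0`. -/
def diffSet (d : ℕ) (P : Finset ℕ) (F0 G : Finset (V d)) : Finset ℕ :=
  P.filter (fun j => decide (origV d j ∈ G) ≠ decide (origV d j ∈ F0))

/-- Degree lexicographic comparison of characteristic (difference) sets. -/
def dlexLT (D D' : Finset ℕ) : Prop :=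
  D.card < D'.card ∨
    (D.card = D'.card ∧ ∃ m, m ∉ D ∧ m ∈ D' ∧ ∀ j < m, (j ∈ D ↔ j ∈ D'))

/-- `L` lists the facets of `Δ` in degree lexicographic order w.r.t. `F0`. -/
def IsDegLexOrder (d : ℕ) (P : Finset ℕ) (Δ : Set (Finset (V d)))
    (F0 : Finset (V d)) (L : List (Finset (V d))) : Prop :=
  L.Nodup ∧ (∀ F, F ∈ L ↔ isFacet Δ F) ∧
    L.Pairwise (fun G G' => dlexLT (diffSet d P F0 G) (diffSet d P F0 G'))

/-- Vertices of `F` sitting at the positions in `D`. -/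
def posVerts (d : ℕ) (F : Finset (V d)) (D : Finset ℕ) : Finset (V d) :=
  F.filter (fun x => ∃ j ∈ D, x = origV d j ∨ x = newV d j)

def IsoN (Δ Γ : Set (Finset ℕ)) : Prop :=
  ∃ e : Equiv.Perm ℕ, ∀ F : Finset ℕ, F ∈ Δ ↔ F.image (⇑e) ∈ Γ

def StellarMove (Δ Γ : Set (Finset ℕ)) : Prop :=
  ∃ (F : Finset ℕ) (v : ℕ), F ∈ Δ ∧ F ≠ ∅ ∧ (∀ G ∈ Δ, v ∉ G) ∧ Γ = sdC v F Δ

/-- PL homeomorphism of simplicial complexes, encoded via Alexander's theorem as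
stellar equivalence: the equivalence relation generated by stellar subdivisions
(and their inverses, the welds) together with simplicial isomorphisms. -/
def PLHomeo (Δ Γ : Set (Finset ℕ)) : Prop :=
  Relation.EqvGen (fun A B => StellarMove A B ∨ IsoN A B) Δ Γ

def encV (d : ℕ) : V d → ℕ := Sum.elim (fun j => 2 * j.val) (fun j => 2 * j.val + 1)

def toN (d : ℕ) (Δ : Set (Finset (V d))) : Set (Finset ℕ) := mapC (encV d) Δ

def ballN (c : ℕ) : Set (Finset ℕ) := {F | F ⊆ Finset.range c}

def sphereN (c : ℕ) : Set (Finset ℕ) := {F | F ⊂ Finset.range (c+1)}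

/-- `Δ` is a combinatorial ball of dimension `c-1` (a `(c-1)`-simplex has `c` vertices). -/
def IsCombBall (d c : ℕ) (Δ : Set (Finset (V d))) : Prop := PLHomeo (toN d Δ) (ballN c)

/-- `Δ` is a combinatorial sphere of dimension `c-1`. -/
def IsCombSphere (d c : ℕ) (Δ : Set (Finset (V d))) : Prop := PLHomeo (toN d Δ) (sphereN c)

def ConnC (Δ : Set (Finset W)) : Prop :=
  ∀ u v : W, ({u} : Finset W) ∈ Δ → ({v} : Finset W) ∈ Δ →
    Relation.ReflTransGen (fun a b => ({a, b} : Finset W) ∈ Δ) u v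

/-- Combinatorial `d`-manifold (possibly with boundary): connected, pure, and all
links of nonempty faces are combinatorial balls or spheres of dimension `d - |F|`. -/
def IsCombManifold (d : ℕ) (Δ : Set (Finset (V d))) : Prop :=
  IsComplex Δ ∧ (∅ : Finset (V d)) ∈ Δ ∧ ConnC Δ ∧
  (∀ F ∈ Δ, ∃ G, isFacet Δ G ∧ F ⊆ G ∧ G.card = d+1) ∧
  ∀ F ∈ Δ, F ≠ (∅ : Finset (V d)) →
    (IsCombBall d (d+1-F.card) (lkC Δ F) ∨ IsCombSphere d (d+1-F.card) (lkC Δ F))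

def liftV (d : ℕ) : V d → V (d+1) := Sum.map Fin.castSucc Fin.castSucc

/-- The relabeling `π : i ↦ i+1`, `v_i ↦ v_{i+1}`. -/
def piV (d : ℕ) : V d → V (d+1) := Sum.map Fin.succ Fin.succ

/-- The relabeling `ρ : i ↦ i-1`, `v_i ↦ v_{i-1}` (indices mod `d+1`). -/
def rhoV (d : ℕ) : V d → V d := fun x =>
  match x with
  | Sum.inl j => origV d ((j.val + d) % (d+1))
  | Sum.inr j => newV d ((j.val + d) % (d+1))

/-- `ψ` swaps the vertices `d` and `v_d`. -/
def psiV (d : ℕ) : V d → V d := fun x => Equiv.swap (origV d d) (newV d d) x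

def sigmaV (d : ℕ) : V d → V d := psiV d ∘ rhoV d

/-- `Δ` is (isomorphic to) the boundary complex of the `(d+1)`-dimensional
cross-polytope. -/
def IsCrossBdry (d : ℕ) (Δ : Set (Finset W)) : Prop :=
  ∃ f : Fin (d+1) × Bool → W, Function.Injective f ∧
    Δ = {F | (∀ v ∈ F, ∃ p, v = f p) ∧
             ∀ j : Fin (d+1), ¬ (f (j, true) ∈ F ∧ f (j, false) ∈ F)}

/-- `Sg` is a connected sum of `Δ` and `Γ`: they meet exactly in the full simplex
on a common facet `F`, which is removed. -/
def IsConnSum (Δ Γ Sg : Set (Finset W)) : Prop :=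
  ∃ F : Finset W, isFacet Δ F ∧ isFacet Γ F ∧ Δ ∩ Γ = simplexOn F ∧ Sg = (Δ ∪ Γ) \ {F}

/-- Connected sum of `m+1` copies of the boundary of the `(d+1)`-cross-polytope. -/
def IsCrossStacked (d : ℕ) : ℕ → Set (Finset W) → Prop
  | 0, Δ => IsCrossBdry d Δ
  | (m+1), Δ => ∃ A B : Set (Finset W), IsCrossStacked d m A ∧ IsCrossBdry d B ∧ IsConnSum A B Δ

/-- The initial facet of the block `Diam(Γ_{iℓ})` (for block index `ℓ ≥ 1`;
block `0` uses the facet `G0` meeting the boundary). -/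
def initFacet (d i1 iℓ : ℕ) (G0 : Finset (V d)) (ℓ : ℕ) : Finset (V d) :=
  if ℓ = 0 then G0
  else ((Finset.range iℓ).image (origV d)) ∪ {newV d iℓ} ∪
       ((Finset.Ioo iℓ (max i1 iℓ)).image (origV d)) ∪
       ((Finset.Icc (max i1 iℓ) d).image (newV d))

/-! Stellar subdivision commutes with unions, so `⋄(Γ_I)` is the union of the `⋄(Γ_i)`, `i ∈ I`.
Each of these is computed explicitly: the subdivisions at `F_0, …, F_d` turn `Γ_i` into the faces
of the boundary of the cross-polytope on the pairs `{j, v_j}`, `j ≤ d`, lying in a facet whose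
first new vertex is `v_i` (no new vertex at all when `i = d+1`).
If `d+1 ∈ I` and `l` is the largest index missing from `I`, the transposition `l ↔ v_l` carries
`⋄(Γ_I)` onto `⋄(Γ_J)` with `J = (I ∩ [0, l)) ∪ {l} ⊆ {0, …, d}`. For `I ⊆ {0, …, d}` the complex
`⋄(Γ_I)` has `∑_{i ∈ I} 2^(d-i)` facets, and binary expansions are unique. -/

open Finset

section Vertices

variable {d : ℕ}

lemma origV_of_lt {m : ℕ} (h : m < d+2) : origV d m = Sum.inl ⟨m, h⟩ := by
  simp [origV, Nat.mod_eq_of_lt h]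

lemma newV_of_lt {m : ℕ} (h : m < d+1) : newV d m = Sum.inr ⟨m, h⟩ := by
  simp [newV, Nat.mod_eq_of_lt h]

lemma V_cases (z : V d) : (∃ a < d+2, z = origV d a) ∨ ∃ a < d+1, z = newV d a := by
  rcases z with ⟨a, ha⟩ | ⟨a, ha⟩
  · exact Or.inl ⟨a, ha, (origV_of_lt ha).symm⟩
  · exact Or.inr ⟨a, ha, (newV_of_lt ha).symm⟩

@[simp] lemma origV_ne_newV (a b : ℕ) : origV d a ≠ newV d b := Sum.inl_ne_inr

@[simp] lemma newV_ne_origV (a b : ℕ) : newV d a ≠ origV d b := Sum.inr_ne_inl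

lemma origV_inj {a b : ℕ} (ha : a < d+2) (hb : b < d+2) : origV d a = origV d b ↔ a = b := by
  simp [origV_of_lt ha, origV_of_lt hb]

lemma newV_inj {a b : ℕ} (ha : a < d+1) (hb : b < d+1) : newV d a = newV d b ↔ a = b := by
  simp [newV_of_lt ha, newV_of_lt hb]

lemma origV_mem_image_origV {a : ℕ} {s : Finset ℕ} (ha : a < d+2) (hs : ∀ m ∈ s, m < d+2) :
    origV d a ∈ s.image (origV d) ↔ a ∈ s := by
  refine ⟨fun h => ?_, mem_image_of_mem _⟩
  obtain ⟨m, hm, hma⟩ := mem_image.mp h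
  rwa [← (origV_inj (hs m hm) ha).mp hma]

@[simp] lemma newV_not_mem_image_origV (a : ℕ) (s : Finset ℕ) : newV d a ∉ s.image (origV d) := by
  simp

end Vertices

section Faces

variable {d : ℕ}

/-- For `k = d+1`, the facets of the cross-polytope on the pairs `{j, v_j}`, `j ≤ d`. -/
def crossFace (d k : ℕ) (ε : ℕ → Bool) : Finset (V d) :=
  (range k).image (fun j => if ε j then newV d j else origV d j)

def tailFace (d k x : ℕ) : Finset (V d) := ((Icc k (d+1)).erase x).image (origV d)

lemma origV_mem_crossFace {a k : ℕ} {ε : ℕ → Bool} (ha : a < d+2) (hk : k ≤ d+1) :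
    origV d a ∈ crossFace d k ε ↔ a < k ∧ ε a = false := by
  simp only [crossFace, mem_image, mem_range]
  constructor
  · rintro ⟨j, hj, hja⟩
    cases hε : ε j <;> simp only [hε] at hja
    · obtain rfl := (origV_inj (by omega) ha).mp hja
      exact ⟨hj, hε⟩
    · exact absurd hja (newV_ne_origV _ _)
  · rintro ⟨hak, hε⟩
    exact ⟨a, hak, by simp [hε]⟩

lemma newV_mem_crossFace {a k : ℕ} {ε : ℕ → Bool} (ha : a < d+1) (hk : k ≤ d+1) :
    newV d a ∈ crossFace d k ε ↔ a < k ∧ ε a = true := by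
  simp only [crossFace, mem_image, mem_range]
  constructor
  · rintro ⟨j, hj, hja⟩
    cases hε : ε j <;> simp only [hε] at hja
    · exact absurd hja (origV_ne_newV _ _)
    · obtain rfl := (newV_inj (by omega) ha).mp hja
      exact ⟨hj, hε⟩
  · rintro ⟨hak, hε⟩
    exact ⟨a, hak, by simp [hε]⟩

lemma origV_mem_tailFace {a k x : ℕ} (ha : a < d+2) :
    origV d a ∈ tailFace d k x ↔ k ≤ a ∧ a ≠ x := by
  rw [tailFace, origV_mem_image_origV ha (fun m hm => by simp at hm; omega)]
  simp only [mem_erase, mem_Icc]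
  omega

lemma origV_mem_Fsub {a k : ℕ} (ha : a < d+2) : origV d a ∈ Fsub d k ↔ k < a := by
  rw [Fsub, origV_mem_image_origV ha (fun m hm => by simp at hm; omega)]
  simp only [mem_Ioc]
  omega

@[simp] lemma newV_not_mem_Fsub (a k : ℕ) : newV d a ∉ Fsub d k :=
  newV_not_mem_image_origV _ _

lemma origV_mem_Gface {a i : ℕ} (ha : a < d+2) : origV d a ∈ Gface d i ↔ a ≠ i := by
  rw [Gface, origV_mem_image_origV ha (fun m hm => by simp at hm; omega)]
  simp [ha]

end Faces

section Lead

variable {d : ℕ}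

def lead (d : ℕ) (ε : ℕ → Bool) : ℕ := Nat.find (⟨d+1, Or.inl d.lt_succ_self⟩ : ∃ i, d < i ∨ ε i)

lemma lead_eq_iff {ε : ℕ → Bool} {i : ℕ} :
    lead d ε = i ↔ i ≤ d+1 ∧ (∀ j < i, ε j = false) ∧ (i ≤ d → ε i = true) := by
  rw [lead, Nat.find_eq_iff]
  simp only [not_or, not_lt, Bool.not_eq_true]
  constructor
  · rintro ⟨hi, hlt⟩
    have hid : i ≤ d+1 := by
      by_contra! h
      exact absurd (hlt (d+1) h).1 (by omega)
    exact ⟨hid, fun j hj => (hlt j hj).2, fun h => hi.resolve_left (by omega)⟩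
  · rintro ⟨hid, hlt, hi⟩
    refine ⟨?_, fun j hj => ⟨by omega, hlt j hj⟩⟩
    by_cases h : i ≤ d
    · exact Or.inr (hi h)
    · exact Or.inl (by omega)

lemma lead_le (ε : ℕ → Bool) : lead d ε ≤ d+1 := (lead_eq_iff.mp rfl).1

lemma eq_false_of_lt_lead {ε : ℕ → Bool} {j : ℕ} (h : j < lead d ε) : ε j = false :=
  (lead_eq_iff.mp rfl).2.1 j h

lemma lead_spec {ε : ℕ → Bool} (h : lead d ε ≤ d) : ε (lead d ε) = true :=
  (lead_eq_iff.mp rfl).2.2 h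

lemma lead_le_of_eq_true {ε : ℕ → Bool} {j : ℕ} (h : ε j = true) : lead d ε ≤ j := by
  by_contra! hj
  simp [eq_false_of_lt_lead hj] at h

lemma lead_congr {ε ε' : ℕ → Bool} (h : ∀ j ≤ d, ε j = ε' j) : lead d ε = lead d ε' := by
  obtain ⟨hle, hlt, hi⟩ := lead_eq_iff.mp (rfl : lead d ε = _)
  refine (lead_eq_iff.mpr ⟨hle, fun j hj => ?_, fun hd => ?_⟩).symm
  · rw [← h j (by omega)]; exact hlt j hj
  · rw [← h _ hd]; exact hi hd

lemma lead_update_of_lt {ε : ℕ → Bool} {k : ℕ} (b : Bool) (hk : lead d ε < k) :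
    lead d (Function.update ε k b) = lead d ε := by
  refine lead_eq_iff.mpr ⟨lead_le ε, fun j hj => ?_, fun hd => ?_⟩
  · rw [Function.update_of_ne (by omega)]; exact eq_false_of_lt_lead hj
  · rw [Function.update_of_ne (by omega)]; exact lead_spec hd

lemma lead_update_true {ε : ℕ → Bool} {k : ℕ} (hk : lead d ε ≤ k) (hkd : k ≤ d) :
    lead d (Function.update ε k true) = lead d ε := by
  rcases hk.lt_or_eq with hk | rfl
  · exact lead_update_of_lt _ hk
  · rw [Function.update_eq_self_iff.mpr (lead_spec hkd).symm]

lemma lead_update_false {ε : ℕ → Bool} {k : ℕ} (hk : k ≠ lead d ε) :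
    lead d (Function.update ε k false) = lead d ε := by
  refine lead_eq_iff.mpr ⟨lead_le ε, fun j hj => ?_, fun hd => ?_⟩
  · rcases eq_or_ne j k with rfl | hjk
    · exact Function.update_self _ _ _
    · rw [Function.update_of_ne hjk]; exact eq_false_of_lt_lead hj
  · rw [Function.update_of_ne hk.symm]; exact lead_spec hd

end Lead

section FaceAlgebra

variable {d : ℕ}

lemma crossFace_succ (k : ℕ) (ε : ℕ → Bool) :
    crossFace d (k+1) ε = insert (if ε k then newV d k else origV d k) (crossFace d k ε) := by
  rw [crossFace, range_add_one, image_insert, crossFace]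

lemma crossFace_update_of_le {k j : ℕ} (hkj : k ≤ j) (ε : ℕ → Bool) (b : Bool) :
    crossFace d k (Function.update ε j b) = crossFace d k ε :=
  image_congr fun m hm => by
    simp only [coe_range, Set.mem_Iio] at hm
    simp only [Function.update_of_ne (show m ≠ j by omega)]

lemma crossFace_subset_succ (k : ℕ) (ε : ℕ → Bool) : crossFace d k ε ⊆ crossFace d (k+1) ε := by
  rw [crossFace_succ]; exact subset_insert _ _

lemma tailFace_self (k : ℕ) : tailFace d k k = Fsub d k := by
  rw [tailFace, Fsub]
  congr 1
  ext m
  simp only [mem_erase, mem_Icc, mem_Ioc]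
  omega

lemma tailFace_succ_subset_Fsub (k x : ℕ) : tailFace d (k+1) x ⊆ Fsub d k := by
  refine image_subset_image fun m hm => ?_
  simp only [mem_erase, mem_Icc, mem_Ioc] at hm ⊢
  omega

lemma crossFace_union_tailFace_of_lt {k x : ℕ} (ε : ℕ → Bool) (hkx : k < x) (hk : k ≤ d+1) :
    crossFace d k ε ∪ tailFace d k x =
      crossFace d (k+1) (Function.update ε k false) ∪ tailFace d (k+1) x := by
  rw [crossFace_succ, crossFace_update_of_le le_rfl, Function.update_self,
    if_neg Bool.false_ne_true, insert_union, ← union_insert, tailFace, tailFace, ← image_insert]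
  congr 2
  ext m
  simp only [mem_insert, mem_erase, mem_Icc]
  omega

lemma origV_not_mem_crossFace_union_tailFace {k x : ℕ} (ε : ℕ → Bool) (hkx : k ≤ x)
    (hx : x ≤ d+1) : origV d x ∉ crossFace d k ε ∪ tailFace d k x := by
  rw [mem_union, origV_mem_crossFace (by omega) (by omega), origV_mem_tailFace (by omega)]
  omega

lemma eq_of_Fsub_subset {k x : ℕ} {ε : ℕ → Bool} (hkx : k ≤ x) (hx : x ≤ d+1)
    (h : Fsub d k ⊆ crossFace d k ε ∪ tailFace d k x) : x = k := by
  by_contra hne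
  exact origV_not_mem_crossFace_union_tailFace ε hkx hx
    (h ((origV_mem_Fsub (by omega)).mpr (by omega)))

lemma disjoint_Fsub_crossFace {k : ℕ} (ε : ℕ → Bool) (hk : k ≤ d+1) :
    Disjoint (Fsub d k) (crossFace d k ε) := by
  rw [disjoint_left]
  intro z hzF hzC
  rcases V_cases z with ⟨a, ha, rfl⟩ | ⟨a, ha, rfl⟩
  · rw [origV_mem_Fsub ha] at hzF
    rw [origV_mem_crossFace ha hk] at hzC
    omega
  · exact newV_not_mem_Fsub _ _ hzF

end FaceAlgebra

section Subdivision

lemma mem_sdC {v : W} {F G : Finset W} {Δ : Set (Finset W)} :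
    G ∈ sdC v F Δ ↔ (G ∈ Δ ∧ ¬ F ⊆ G) ∨
      ∃ a ⊆ {v}, ∃ b ⊂ F, ∃ g, Disjoint F g ∧ F ∪ g ∈ Δ ∧ G = a ∪ (b ∪ g) := by
  simp only [sdC, delFace, joinC, lkC, simplexOn, bdrySimplex, Set.mem_union, Set.mem_ofPred_eq]
  constructor
  · rintro (h | ⟨a, ha, _, ⟨b, hb, g, hg, rfl⟩, rfl⟩)
    · exact Or.inl h
    · exact Or.inr ⟨a, ha, b, hb, g, hg.1, hg.2, rfl⟩
  · rintro (h | ⟨a, ha, b, hb, g, hgF, hg, rfl⟩)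
    · exact Or.inl h
    · exact Or.inr ⟨a, ha, _, ⟨b, hb, g, ⟨hgF, hg⟩, rfl⟩, rfl⟩

lemma sdC_iUnion {ι : Sort*} (v : W) (F : Finset W) (A : ι → Set (Finset W)) :
    sdC v F (⋃ i, A i) = ⋃ i, sdC v F (A i) := by
  ext G
  simp only [mem_sdC, Set.mem_iUnion]
  constructor
  · rintro (⟨⟨i, hi⟩, hF⟩ | ⟨a, ha, b, hb, g, hgF, ⟨i, hi⟩, rfl⟩)
    · exact ⟨i, Or.inl ⟨hi, hF⟩⟩
    · exact ⟨i, Or.inr ⟨a, ha, b, hb, g, hgF, hi, rfl⟩⟩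
  · rintro ⟨i, ⟨hi, hF⟩ | ⟨a, ha, b, hb, g, hgF, hi, rfl⟩⟩
    · exact Or.inl ⟨⟨i, hi⟩, hF⟩
    · exact Or.inr ⟨a, ha, b, hb, g, hgF, ⟨i, hi⟩, rfl⟩

end Subdivision

section PartialDiamond

variable {d : ℕ}

/-- The complex obtained from `Γ_i` after the first `k` stellar subdivisions of `⋄`.
A face lies in the cross-polytope part on the first `k` pairs `{j, v_j}` and misses one original
vertex `x ≥ k`, which must be `i` itself as long as `k ≤ i`. -/
def partialDiam (d i k : ℕ) : Set (Finset (V d)) :=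
  {F | ∃ ε x, lead d ε = i ∧ k ≤ x ∧ x ≤ d+1 ∧ (k ≤ i → x = i) ∧
    F ⊆ crossFace d k ε ∪ tailFace d k x}

lemma exists_origV_not_mem_of_not_Fsub_subset {k : ℕ} {G : Finset (V d)}
    (h : ¬ Fsub d k ⊆ G) : ∃ m, k < m ∧ m < d+2 ∧ origV d m ∉ G := by
  obtain ⟨z, hzF, hzG⟩ := not_subset.mp h
  rcases V_cases z with ⟨m, hm, rfl⟩ | ⟨m, -, rfl⟩
  · exact ⟨m, (origV_mem_Fsub hm).mp hzF, hm, hzG⟩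
  · exact absurd hzF (newV_not_mem_Fsub _ _)

lemma subset_union_tailFace_of_subset_union_Fsub {k m : ℕ} {C G : Finset (V d)}
    (hG : G ⊆ C ∪ Fsub d k) (hm : origV d m ∉ G) (hkm : k < m) :
    G ⊆ C ∪ tailFace d (k+1) m := by
  intro z hz
  refine mem_union.mpr ((mem_union.mp (hG hz)).imp id fun hzF => ?_)
  rcases V_cases z with ⟨a, ha, rfl⟩ | ⟨a, -, rfl⟩
  · have ham : a ≠ m := by rintro rfl; exact hm hz
    rw [origV_mem_Fsub ha] at hzF
    rw [origV_mem_tailFace ha]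
    omega
  · exact absurd hzF (newV_not_mem_Fsub _ _)

lemma mem_partialDiam_succ_of_not_Fsub_subset {i k : ℕ} {G : Finset (V d)} (hk : k ≤ d)
    (hG : G ∈ partialDiam d i k) (hF : ¬ Fsub d k ⊆ G) : G ∈ partialDiam d i (k+1) := by
  obtain ⟨ε, x, rfl, hkx, hx, hxi, hsub⟩ := hG
  rcases hkx.lt_or_eq with hkx | rfl
  · have hki : k ≠ lead d ε := fun h => by have := hxi h.le; omega
    refine ⟨Function.update ε k false, x, lead_update_false hki, hkx, hx,
      fun h => hxi (by omega), ?_⟩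
    rwa [← crossFace_union_tailFace_of_lt ε hkx (by omega)]
  · rw [tailFace_self] at hsub
    obtain ⟨m, hkm, hm, hmG⟩ := exists_origV_not_mem_of_not_Fsub_subset hF
    refine ⟨ε, m, rfl, hkm, by omega, fun h => by have := hxi (by omega); omega, ?_⟩
    exact (subset_union_tailFace_of_subset_union_Fsub hsub hmG hkm).trans
      (union_subset_union (crossFace_subset_succ _ _) subset_rfl)

lemma mem_partialDiam_succ_of_join {i k : ℕ} {a b g : Finset (V d)} (hk : k ≤ d)
    (ha : a ⊆ {newV d k}) (hb : b ⊂ Fsub d k) (hg : Disjoint (Fsub d k) g)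
    (hFg : Fsub d k ∪ g ∈ partialDiam d i k) : a ∪ (b ∪ g) ∈ partialDiam d i (k+1) := by
  obtain ⟨ε, x, rfl, hkx, hx, hxi, hsub⟩ := hFg
  obtain rfl : x = k := eq_of_Fsub_subset hkx hx (subset_union_left.trans hsub)
  rw [tailFace_self] at hsub
  have hlead : lead d ε ≤ x := by by_contra h; have := hxi (by omega); omega
  obtain ⟨m, hxm, hm, hmb⟩ := exists_origV_not_mem_of_not_Fsub_subset (not_subset_of_ssubset hb)
  have hcross : crossFace d (x+1) (Function.update ε x true) =
      insert (newV d x) (crossFace d x ε) := by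
    rw [crossFace_succ, Function.update_self, if_pos rfl, crossFace_update_of_le le_rfl]
  have hgC : g ⊆ crossFace d x ε := fun z hz =>
    (mem_union.mp (hsub (mem_union_right _ hz))).resolve_right (disjoint_right.mp hg hz)
  have hmF : origV d m ∈ Fsub d x := (origV_mem_Fsub hm).mpr hxm
  refine ⟨Function.update ε x true, m, lead_update_true hlead hk, hxm, by omega,
    fun h => by omega, subset_union_tailFace_of_subset_union_Fsub ?_ ?_ hxm⟩
  · rw [hcross]
    refine union_subset (ha.trans ?_) (union_subset (hb.subset.trans subset_union_right) ?_)
    · simp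
    · exact hgC.trans ((subset_insert _ _).trans subset_union_left)
  · simp only [mem_union, not_or]
    exact ⟨fun h => by simpa using ha h, hmb, disjoint_left.mp hg hmF⟩

lemma mem_sdC_partialDiam_of_mem_succ {i k : ℕ} {G : Finset (V d)} (hk : k ≤ d)
    (hG : G ∈ partialDiam d i (k+1)) : G ∈ sdC (newV d k) (Fsub d k) (partialDiam d i k) := by
  obtain ⟨ε, x, rfl, hkx, hx, hxi, hsub⟩ := hG
  have hxF : origV d x ∈ Fsub d k := (origV_mem_Fsub (by omega)).mpr (by omega)
  have hxG : origV d x ∉ G := fun h => origV_not_mem_crossFace_union_tailFace ε hkx hx (hsub h)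
  rw [mem_sdC]
  cases hεk : ε k
  · refine Or.inl ⟨⟨ε, x, rfl, by omega, hx, fun h => hxi ?_, ?_⟩, fun h => hxG (h hxF)⟩
    · rcases h.lt_or_eq with h | rfl
      · exact h
      · simp [lead_spec hk] at hεk
    · rwa [crossFace_union_tailFace_of_lt ε (by omega) (by omega),
        Function.update_eq_self_iff.mpr hεk.symm]
  · have hlead : lead d ε ≤ k := lead_le_of_eq_true hεk
    rw [crossFace_succ, if_pos hεk] at hsub
    refine Or.inr ⟨G ∩ {newV d k}, inter_subset_right, G ∩ tailFace d (k+1) x, ?_,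
      G ∩ crossFace d k ε, (disjoint_Fsub_crossFace ε (by omega)).mono_right inter_subset_right,
      ⟨ε, k, rfl, le_rfl, by omega, fun h => (le_antisymm hlead h).symm, ?_⟩, ?_⟩
    · rw [ssubset_iff_of_subset (inter_subset_right.trans (tailFace_succ_subset_Fsub _ _))]
      exact ⟨origV d x, hxF, fun h => hxG (mem_inter.mp h).1⟩
    · rw [tailFace_self]
      exact union_subset subset_union_right (inter_subset_right.trans subset_union_left)
    · rw [← inter_union_distrib_left, ← inter_union_distrib_left, eq_comm, inter_eq_left]
      intro z hz
      have := hsub hz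
      simp only [mem_union, mem_insert, mem_singleton] at this ⊢
      tauto

lemma sdC_partialDiam {i k : ℕ} (hk : k ≤ d) :
    sdC (newV d k) (Fsub d k) (partialDiam d i k) = partialDiam d i (k+1) := by
  ext G
  refine ⟨fun h => ?_, mem_sdC_partialDiam_of_mem_succ hk⟩
  rcases mem_sdC.mp h with ⟨hG, hF⟩ | ⟨a, ha, b, hb, g, hg, hFg, rfl⟩
  · exact mem_partialDiam_succ_of_not_Fsub_subset hk hG hF
  · exact mem_partialDiam_succ_of_join hk ha hb hg hFg

lemma partialDiam_zero {i : ℕ} (hi : i ≤ d+1) : partialDiam d i 0 = GammaC d i := by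
  have htail : tailFace d 0 i = Gface d i := by
    ext z
    rcases V_cases z with ⟨a, ha, rfl⟩ | ⟨a, -, rfl⟩
    · rw [origV_mem_tailFace ha, origV_mem_Gface ha]
      omega
    · simp [tailFace, Gface]
  ext G
  simp only [partialDiam, GammaC, simplexOn, crossFace, range_zero, image_empty, empty_union,
    Set.mem_ofPred_eq]
  constructor
  · rintro ⟨ε, x, -, -, -, hxi, hG⟩
    rwa [hxi (Nat.zero_le _), htail] at hG
  · intro hG
    refine ⟨fun j => decide (i ≤ j), i, lead_eq_iff.mpr ⟨hi, ?_, ?_⟩, Nat.zero_le _, hi,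
      fun _ => rfl, htail ▸ hG⟩
    · intro j hj; simpa using hj
    · intro _; simp

lemma partialDiam_top (i : ℕ) :
    partialDiam d i (d+1) = {F | ∃ ε, lead d ε = i ∧ F ⊆ crossFace d (d+1) ε} := by
  have htail : tailFace d (d+1) (d+1) = ∅ := by simp [tailFace]
  ext G
  simp only [partialDiam, Set.mem_ofPred_eq]
  constructor
  · rintro ⟨ε, x, hε, hx1, hx2, -, hG⟩
    obtain rfl : x = d+1 := le_antisymm hx2 hx1
    exact ⟨ε, hε, by simpa [htail] using hG⟩
  · rintro ⟨ε, rfl, hG⟩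
    exact ⟨ε, d+1, rfl, le_rfl, le_rfl, fun h => le_antisymm h (lead_le ε),
      by simpa [htail] using hG⟩

end PartialDiamond

section Diamond

variable {d : ℕ}

lemma foldl_sdC_GammaC {i k : ℕ} (hi : i ≤ d+1) (hk : k ≤ d+1) :
    (List.range k).foldl (fun Γ j => sdC (newV d j) (Fsub d j) Γ) (GammaC d i) =
      partialDiam d i k := by
  induction k with
  | zero => exact (partialDiam_zero hi).symm
  | succ k ih =>
    rw [List.range_succ, List.foldl_append, List.foldl_cons, List.foldl_nil, ih (by omega),
      sdC_partialDiam (by omega)]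

lemma Diam_GammaC {i : ℕ} (hi : i ≤ d+1) :
    Diam d (GammaC d i) = {F | ∃ ε, lead d ε = i ∧ F ⊆ crossFace d (d+1) ε} := by
  rw [Diam, foldl_sdC_GammaC hi le_rfl, partialDiam_top]

lemma Diam_iUnion {ι : Sort*} (A : ι → Set (Finset (V d))) :
    Diam d (⋃ j, A j) = ⋃ j, Diam d (A j) := by
  unfold Diam
  induction List.range (d+1) generalizing A with
  | nil => rfl
  | cons a L ih => simp only [List.foldl_cons, sdC_iUnion, ih]

lemma GammaU_eq_biUnion (I : Finset ℕ) : GammaU d I = ⋃ i ∈ I, GammaC d i := by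
  ext F
  simp [GammaU, GammaC, simplexOn]

lemma mem_DiamU {I : Finset ℕ} (hI : I ⊆ range (d+2)) {F : Finset (V d)} :
    F ∈ DiamU d I ↔ ∃ ε, lead d ε ∈ I ∧ F ⊆ crossFace d (d+1) ε := by
  simp only [DiamU, GammaU_eq_biUnion, Diam_iUnion, Set.mem_iUnion]
  constructor
  · rintro ⟨i, hi, hF⟩
    rw [Diam_GammaC (Nat.lt_succ_iff.mp (mem_range.mp (hI hi)))] at hF
    obtain ⟨ε, rfl, hF⟩ := hF
    exact ⟨ε, hi, hF⟩
  · rintro ⟨ε, hε, hF⟩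
    refine ⟨lead d ε, hε, ?_⟩
    rw [Diam_GammaC (lead_le ε)]
    exact ⟨ε, rfl, hF⟩

end Diamond

section Isomorphism

lemma isoC_refl (Δ : Set (Finset W)) : IsoC Δ Δ :=
  ⟨Equiv.refl W, fun F => by simp⟩

lemma IsoC.symm {Δ Γ : Set (Finset W)} (h : IsoC Δ Γ) : IsoC Γ Δ := by
  obtain ⟨e, he⟩ := h
  refine ⟨e.symm, fun F => ?_⟩
  rw [he, image_image, Equiv.self_comp_symm, image_id]

lemma IsoC.trans {Δ Γ Ω : Set (Finset W)} (h₁ : IsoC Δ Γ) (h₂ : IsoC Γ Ω) : IsoC Δ Ω := by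
  obtain ⟨e, he⟩ := h₁
  obtain ⟨f, hf⟩ := h₂
  exact ⟨e.trans f, fun F => by rw [he, hf, image_image, Equiv.coe_trans]⟩

lemma isoC_equivalence : Equivalence (@IsoC W _) := ⟨isoC_refl, IsoC.symm, IsoC.trans⟩

end Isomorphism

section Reduction

variable {d : ℕ}

lemma crossFace_image_swap {l : ℕ} (hl : l ≤ d) (ε : ℕ → Bool) :
    (crossFace d (d+1) ε).image (Equiv.swap (origV d l) (newV d l)) =
      crossFace d (d+1) (Function.update ε l (!ε l)) := by
  rw [crossFace, crossFace, image_image]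
  refine image_congr fun j hj => ?_
  simp only [coe_range, Set.mem_Iio] at hj
  rcases eq_or_ne j l with rfl | hjl
  · cases hεj : ε j <;> simp [hεj]
  · have horig : origV d j ≠ origV d l := mt (origV_inj (by omega) (by omega)).mp hjl
    have hnew : newV d j ≠ newV d l := mt (newV_inj hj (by omega)).mp hjl
    cases hεj : ε j <;>
      simp [hεj, Function.update_of_ne hjl, Equiv.swap_apply_of_ne_of_ne, horig, hnew]

lemma lead_flip_mem_iff {I : Finset ℕ} {l : ℕ} (hl : l ≤ d) (hlI : l ∉ I)
    (htail : ∀ m, l < m → m ≤ d+1 → m ∈ I) (ε : ℕ → Bool) :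
    lead d (Function.update ε l (!ε l)) ∈ insert l (I.filter (· < l)) ↔ lead d ε ∈ I := by
  rcases lt_trichotomy (lead d ε) l with h | rfl | h
  · rw [lead_update_of_lt _ h]
    simp [h, h.ne]
  · have hlt : lead d ε < lead d (Function.update ε (lead d ε) (!ε (lead d ε))) := by
      refine lt_of_le_of_ne (not_lt.mp fun h' => ?_) fun h' => ?_
      · have := lead_spec (d := d) (h'.le.trans hl)
        rw [Function.update_of_ne h'.ne, eq_false_of_lt_lead h'] at this
        exact Bool.false_ne_true this
      · have := lead_spec (d := d) (h' ▸ hl)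
        rw [← h', Function.update_self, lead_spec hl] at this
        exact Bool.false_ne_true this
    simp [hlI, hlt.ne', hlt.not_gt]
  · have hflip : lead d (Function.update ε l (!ε l)) = l := by
      refine lead_eq_iff.mpr ⟨by omega, fun j hj => ?_, fun _ => ?_⟩
      · rw [Function.update_of_ne hj.ne]; exact eq_false_of_lt_lead (hj.trans h)
      · simp [eq_false_of_lt_lead h]
    simp [hflip, htail _ h (lead_le ε)]

lemma isoC_DiamU_of_tail {I : Finset ℕ} (hI : I ⊆ range (d+2)) {l : ℕ} (hl : l ≤ d) (hlI : l ∉ I)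
    (htail : ∀ m, l < m → m ≤ d+1 → m ∈ I) :
    IsoC (DiamU d I) (DiamU d (insert l (I.filter (· < l)))) := by
  have hJ : insert l (I.filter (· < l)) ⊆ range (d+2) :=
    insert_subset (mem_range.mpr (by omega)) ((filter_subset _ _).trans hI)
  refine ⟨Equiv.swap (origV d l) (newV d l), fun F => ?_⟩
  rw [mem_DiamU hI, mem_DiamU hJ]
  constructor
  · rintro ⟨ε, hε, hF⟩
    exact ⟨_, (lead_flip_mem_iff hl hlI htail ε).mpr hε,
      crossFace_image_swap hl ε ▸ image_subset_image hF⟩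
  · rintro ⟨ε', hε', hF⟩
    set ε := Function.update ε' l (!ε' l)
    have hinv : Function.update ε l (!ε l) = ε' := by simp [ε]
    refine ⟨ε, (lead_flip_mem_iff hl hlI htail ε).mp (hinv ▸ hε'), ?_⟩
    rw [← hinv, ← crossFace_image_swap hl] at hF
    exact (image_subset_image_iff (Equiv.injective _)).mp hF

lemma exists_isoC_DiamU_subset_range {I : Finset ℕ} (hI : I ⊆ range (d+2)) (hne : I.Nonempty)
    (hfull : I ≠ range (d+2)) :
    ∃ J ⊆ range (d+1), J.Nonempty ∧ IsoC (DiamU d I) (DiamU d J) := by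
  by_cases hd : d+1 ∈ I
  · have hgap : (range (d+2) \ I).Nonempty :=
      sdiff_nonempty.mpr fun h => hfull (subset_antisymm hI h)
    set l := (range (d+2) \ I).max' hgap
    obtain ⟨hl, hlI⟩ : l ∈ range (d+2) ∧ l ∉ I := mem_sdiff.mp (max'_mem _ hgap)
    have hld : l ≤ d := by
      have : l ≠ d+1 := fun h => hlI (h ▸ hd)
      simp at hl; omega
    have htail : ∀ m, l < m → m ≤ d+1 → m ∈ I := fun m hlm hm => by
      by_contra hmI
      exact absurd ((range (d+2) \ I).le_max' m (by simp [hmI]; omega)) (not_le.mpr hlm)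
    refine ⟨insert l (I.filter (· < l)), ?_, insert_nonempty _ _,
      isoC_DiamU_of_tail hI hld hlI htail⟩
    intro j hj
    simp only [mem_insert, mem_filter] at hj
    simp only [mem_range]
    omega
  · refine ⟨I, fun j hj => ?_, hne, isoC_refl _⟩
    have := mem_range.mp (hI hj)
    have : j ≠ d+1 := fun h => hd (h ▸ hj)
    simp only [mem_range]
    omega

end Reduction

section FacetCount

variable {d : ℕ}

lemma card_crossFace {k : ℕ} (hk : k ≤ d+1) (ε : ℕ → Bool) : (crossFace d k ε).card = k := by
  rw [crossFace, card_image_of_injOn, card_range]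
  intro a ha b hb hab
  simp only [coe_range, Set.mem_Iio] at ha hb
  cases hεa : ε a <;> cases hεb : ε b <;>
    simp only [hεa, hεb, Bool.false_eq_true, if_true, if_false] at hab
  · exact (origV_inj (by omega) (by omega)).mp hab
  · exact absurd hab (origV_ne_newV _ _)
  · exact absurd hab (newV_ne_origV _ _)
  · exact (newV_inj (by omega) (by omega)).mp hab

lemma crossFace_congr {k : ℕ} {ε ε' : ℕ → Bool} (h : ∀ j < k, ε j = ε' j) :
    crossFace d k ε = crossFace d k ε' :=
  image_congr fun j hj => by simp only [h j (mem_range.mp hj)]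

lemma eq_of_crossFace_eq {ε ε' : ℕ → Bool} (h : crossFace d (d+1) ε = crossFace d (d+1) ε')
    {j : ℕ} (hj : j ≤ d) : ε j = ε' j := by
  have := congrArg (newV d j ∈ ·) h
  simp only [newV_mem_crossFace (Nat.lt_succ_of_le hj) le_rfl, Nat.lt_succ_of_le hj,
    true_and, eq_iff_iff] at this
  exact Bool.eq_iff_iff.mpr this

lemma lead_decide_mem_insert {i : ℕ} {T : Finset ℕ} (hT : T ⊆ Ioc i d) (hi : i ≤ d) :
    lead d (fun j => decide (j ∈ insert i T)) = i := by
  refine lead_eq_iff.mpr ⟨by omega, fun j hj => ?_, fun _ => by simp⟩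
  have : j ∉ T := fun h => by have := hT h; simp at this; omega
  simp [hj.ne, this]

/-- For `p = ⟨i, T⟩`, the cross-polytope facet with lead index `i` whose other new vertices are
the `v_j`, `j ∈ T`. -/
def leadFacet (d : ℕ) (p : Σ _ : ℕ, Finset ℕ) : Finset (V d) :=
  crossFace d (d+1) (fun j => decide (j ∈ insert p.1 p.2))

lemma facets_DiamU_eq_image_leadFacet {J : Finset ℕ} (hJ : J ⊆ range (d+1)) :
    {F | F ∈ DiamU d J ∧ F.card = d+1} = leadFacet d '' ↑(J.sigma fun i => (Ioc i d).powerset) := by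
  have hJd : ∀ i ∈ J, i ≤ d := fun i hi => Nat.lt_succ_iff.mp (mem_range.mp (hJ hi))
  have hJ2 : J ⊆ range (d+2) := hJ.trans (range_subset_range.mpr (by omega))
  ext F
  simp only [Set.mem_ofPred_eq, Set.mem_image, mem_coe, Sigma.exists, mem_sigma, mem_powerset]
  constructor
  · rintro ⟨hF, hcard⟩
    obtain ⟨ε, hεJ, hsub⟩ := (mem_DiamU hJ2).mp hF
    obtain rfl := eq_of_subset_of_card_le hsub (by rw [card_crossFace le_rfl, hcard])
    refine ⟨lead d ε, (Ioc (lead d ε) d).filter (ε · = true), ⟨hεJ, filter_subset _ _⟩,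
      crossFace_congr fun j hj => ?_⟩
    rcases lt_trichotomy j (lead d ε) with h | rfl | h
    · simp [h.ne, h.not_gt, eq_false_of_lt_lead h]
    · simp [lead_spec (hJd _ hεJ)]
    · simp [h.ne', h, Nat.lt_succ_iff.mp hj]
  · rintro ⟨i, T, ⟨hi, hT⟩, rfl⟩
    exact ⟨(mem_DiamU hJ2).mpr ⟨_, (lead_decide_mem_insert hT (hJd i hi)).symm ▸ hi, subset_rfl⟩,
      card_crossFace le_rfl _⟩

lemma injOn_leadFacet :
    Set.InjOn (leadFacet d) ↑((range (d+1)).sigma fun i => (Ioc i d).powerset) := by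
  rintro ⟨i, T⟩ hp ⟨i', T'⟩ hq hpq
  simp only [mem_coe, mem_sigma, mem_powerset, mem_range] at hp hq
  have hmem : ∀ j ≤ d, j ∈ insert i T ↔ j ∈ insert i' T' := fun j hj =>
    decide_eq_decide.mp (eq_of_crossFace_eq hpq hj)
  obtain rfl : i = i' := by
    rw [← lead_decide_mem_insert hp.2 (by omega), ← lead_decide_mem_insert hq.2 (by omega)]
    exact lead_congr fun j hj => decide_eq_decide.mpr (hmem j hj)
  have hsub : ∀ {S S' : Finset ℕ}, S ⊆ Ioc i d →
      (∀ j ≤ d, j ∈ insert i S ↔ j ∈ insert i S') → S ⊆ S' := fun hS h j hj => by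
    have := hS hj
    simp only [mem_Ioc] at this
    exact (mem_insert.mp ((h j this.2).mp (mem_insert_of_mem hj))).resolve_left (by omega)
  rw [subset_antisymm (hsub hp.2 hmem) (hsub hq.2 fun j hj => (hmem j hj).symm)]

lemma fnum_DiamU {J : Finset ℕ} (hJ : J ⊆ range (d+1)) :
    fnum (DiamU d J) (d+1) = ∑ i ∈ J, 2^(d-i) := by
  have hinj : Set.InjOn (leadFacet d) ↑(J.sigma fun i => (Ioc i d).powerset) :=
    injOn_leadFacet.mono (coe_subset.mpr (sigma_mono hJ fun _ => subset_rfl))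
  rw [fnum, facets_DiamU_eq_image_leadFacet hJ, hinj.ncard_image, Set.ncard_coe_finset,
    card_sigma]
  exact sum_congr rfl fun i _ => by rw [card_powerset, Nat.card_Ioc]

end FacetCount

lemma fnum_eq_of_isoC {Δ Γ : Set (Finset W)} (h : IsoC Δ Γ)
    (n : ℕ) : fnum Δ n = fnum Γ n := by
  obtain ⟨e, he⟩ := h
  have himage : {F | F ∈ Γ ∧ F.card = n} = image e '' {F | F ∈ Δ ∧ F.card = n} := by
    ext F
    simp only [Set.mem_ofPred_eq, Set.mem_image]
    constructor
    · rintro ⟨hF, rfl⟩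
      refine ⟨F.image e.symm, ⟨(he _).mpr ?_, card_image_of_injective _ e.symm.injective⟩, ?_⟩ <;>
        simp [image_image, hF]
    · rintro ⟨G, ⟨hG, rfl⟩, rfl⟩
      exact ⟨(he G).mp hG, card_image_of_injective _ e.injective⟩
  rw [fnum, fnum, himage, Set.ncard_image_of_injective _ (image_injective e.injective)]

lemma eq_of_sum_two_pow_sub_eq {d : ℕ} {J J' : Finset ℕ} (hJ : J ⊆ range (d+1))
    (hJ' : J' ⊆ range (d+1)) (h : ∑ i ∈ J, 2^(d-i) = ∑ i ∈ J', 2^(d-i)) : J = J' := by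
  have hinvol : ∀ K ⊆ range (d+1), (K.image (d - ·)).image (d - ·) = K := fun K hK => by
    rw [image_image]
    conv_rhs => rw [← image_id (s := K)]
    exact image_congr fun j hj => by
      have := mem_range.mp (hK hj)
      simp only [Function.comp_apply, id_eq]
      omega
  have hsum : ∀ K ⊆ range (d+1), ∑ i ∈ K, 2^(d-i) = ∑ k ∈ K.image (d - ·), 2^k := fun K hK => by
    refine (sum_image fun a ha b hb hab => ?_).symm
    have := mem_range.mp (hK ha)
    have := mem_range.mp (hK hb)
    omega
  rw [← hinvol J hJ, ← hinvol J' hJ',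
    geomSum_injective le_rfl (show _ = _ from (hsum J hJ).symm.trans (h.trans (hsum J' hJ')))]

lemma eq_of_isoC_DiamU {d : ℕ} {J J' : Finset ℕ} (hJ : J ⊆ range (d+1)) (hJ' : J' ⊆ range (d+1))
    (h : IsoC (DiamU d J) (DiamU d J')) : J = J' :=
  eq_of_sum_two_pow_sub_eq hJ hJ' (by rw [← fnum_DiamU hJ, ← fnum_DiamU hJ', fnum_eq_of_isoC h])

lemma card_quot_eq_of_section {α β : Type*} {r : α → α → Prop} (hr : Equivalence r)
    (f : β → α) (hsurj : ∀ a, ∃ b, r a (f b)) (hinj : ∀ b b', r (f b) (f b') → b = b') :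
    Nat.card (Quot r) = Nat.card β := by
  refine (Nat.card_eq_of_bijective (fun b => Quot.mk r (f b)) ⟨fun b b' h => ?_, fun q => ?_⟩).symm
  · exact hinj b b' (hr.eqvGen_iff.mp (Quot.eq.mp h))
  · induction q using Quot.ind with
    | mk a =>
      obtain ⟨b, hb⟩ := hsurj a
      exact ⟨b, (Quot.sound hb).symm⟩

lemma card_nonempty_subsets_range (n : ℕ) :
    Nat.card {J : Finset ℕ // J ⊆ range n ∧ J.Nonempty} = 2^n - 1 := by
  have e : {J : Finset ℕ // J ⊆ range n ∧ J.Nonempty} ≃ ((range n).powerset.erase ∅ : Finset _) :=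
    Equiv.subtypeEquivRight fun J => by
      rw [mem_erase, mem_powerset, nonempty_iff_ne_empty, and_comm]
  rw [Nat.card_congr e, Nat.card_eq_finsetCard, card_erase_of_mem (empty_mem_powerset _),
    card_powerset, card_range]

/-- there are exactly `2^{d+1}-1` combinatorially distinct basic
cross-flips in dimension `d`: the isomorphism classes of the complexes
`⋄(Γ_I)`, `∅ ≠ I ⊊ {0,…,d+1}`, are in bijection with the nonempty subsets of
`{0,…,d}`. -/
theorem stmt3 (d : ℕ) :
    Nat.card (Quot (fun I J :
        {I : Finset ℕ // I ⊆ Finset.range (d+2) ∧ I.Nonempty ∧ I ≠ Finset.range (d+2)} =>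
        IsoC (DiamU d I.1) (DiamU d J.1))) = 2^(d+1) - 1 ∧
    (∀ I : Finset ℕ, I ⊆ Finset.range (d+2) → I.Nonempty → I ≠ Finset.range (d+2) →
      ∃ J : Finset ℕ, J ⊆ Finset.range (d+1) ∧ J.Nonempty ∧
        IsoC (DiamU d I) (DiamU d J)) ∧
    (∀ J J' : Finset ℕ, J ⊆ Finset.range (d+1) → J' ⊆ Finset.range (d+1) →
      J.Nonempty → J'.Nonempty → IsoC (DiamU d J) (DiamU d J') → J = J') := by
  have hproper : ∀ J ⊆ range (d+1), J ≠ range (d+2) := fun J hJ h => by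
    have := hJ (h ▸ self_mem_range_succ (d+1))
    simp at this
  refine ⟨?_, fun I hI hne hfull => exists_isoC_DiamU_subset_range hI hne hfull,
    fun J J' hJ hJ' _ _ h => eq_of_isoC_DiamU hJ hJ' h⟩
  rw [← card_nonempty_subsets_range]
  refine card_quot_eq_of_section (isoC_equivalence.comap (DiamU d ∘ Subtype.val))
    (fun J => ⟨J.1, J.2.1.trans (range_subset_range.mpr (Nat.le_succ _)), J.2.2, hproper J.1 J.2.1⟩)
    ?_ fun J J' h => Subtype.ext (eq_of_isoC_DiamU J.2.1 J'.2.1 h)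
  intro I
  obtain ⟨J, hJ, hne, hiso⟩ := exists_isoC_DiamU_subset_range I.2.1 I.2.2.1 I.2.2.2
  exact ⟨⟨J, hJ, hne⟩, hiso⟩

end Paper
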